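/- If H is a partial cube and E_f is a Θ-class of H, then each of the two connected components of the graph H \ E_f obtained by deleting the edges of E_f, regarded as a subgraph of H with all induced edges, is an isometric subgraph of H and hence is itself a partial cube. -/

import Mathlib

open SimpleGraph

/-- The hypercube graph `Q_d` on `{0,1}^d`: two vertices are adjacent iff they
differ in exactly one coordinate. -/
def hypercubeGraph (d : ℕ) : SimpleGraph (Fin d → Bool) where
  Adj x y := hammingDist x y = 1
  symm := by
    constructor
    intro x y h
    rwa [hammingDist_comm]
  loopless := by
    constructor
    intro x h
    simp [hammingDist_self] at h

/-- A partial cube: a connected simple graph admitting an isometric embedding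
into some hypercube. -/
def IsPartialCube {V : Type} (G : SimpleGraph V) : Prop :=
  G.Connected ∧
    ∃ (d : ℕ) (φ : V → (Fin d → Bool)), Function.Injective φ ∧
      ∀ v w : V, (hypercubeGraph d).dist (φ v) (φ w) = G.dist v w

/-- The Djoković–Winkler relation `Θ` on (unordered) edges: `e = xy` and
`f = uv` are related iff `d(x,u) + d(y,v) ≠ d(x,v) + d(y,u)`. -/
def DWRel {V : Type} (G : SimpleGraph V) (e f : Sym2 V) : Prop :=
  ∃ x y u v : V, e = s(x, y) ∧ f = s(u, v) ∧
    G.dist x u + G.dist y v ≠ G.dist x v + G.dist y u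

/-- A `Θ`-class of `G`: the set of all edges of `G` related to some fixed edge
`e` of `G` by the Djoković–Winkler relation. -/
def IsThetaClass {V : Type} (G : SimpleGraph V) (C : Set (Sym2 V)) : Prop :=
  ∃ e ∈ G.edgeSet, C = {f | f ∈ G.edgeSet ∧ DWRel G e f}

/-!
Embed `H` isometrically into `Q_d` by `φ`, so that `d_H(v, w)` is the Hamming distance of
`φ v` and `φ w`. An edge `ab` flips exactly one coordinate `i`, and counting coordinate by
coordinate shows that an edge `uv` is Θ-related to `ab` iff it flips `i` as well. Hence every
component of `H \ E_f` lies on one side `φ_i = const`. Hamming betweenness is coordinatewise, so a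
geodesic of `H` between two vertices on the same side never flips `i`: it avoids `E_f` and stays in
the component, which is therefore isometric, and restricting `φ` embeds it isometrically in `Q_d`.
-/

section Hamming

variable {ι : Type*} [Fintype ι] {β : ι → Type*} [∀ i, DecidableEq (β i)]

lemma hammingDist_eq_one_iff {x y : ∀ i, β i} :
    hammingDist x y = 1 ↔ ∃ i, ∀ j, x j ≠ y j ↔ j = i := by
  simp [hammingDist, Finset.card_eq_one, Finset.ext_iff]

lemma hammingDist_update_add_one [DecidableEq ι] {x y : ∀ i, β i} {i : ι} (h : x i ≠ y i) :
    hammingDist (Function.update x i (y i)) y + 1 = hammingDist x y := by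
  have hfilter : ({j | Function.update x i (y i) j ≠ y j} : Finset ι) =
      ({j | x j ≠ y j} : Finset ι).erase i := by
    ext j
    by_cases hj : j = i
    · subst hj; simp
    · simp [hj]
  rw [hammingDist, hfilter, Finset.card_erase_add_one (by simpa using h)]
  rfl

lemma hammingDist_update_self [DecidableEq ι] {x : ∀ i, β i} {i : ι} {b : β i}
    (h : x i ≠ b) :
    hammingDist x (Function.update x i b) = 1 := by
  refine hammingDist_eq_one_iff.mpr ⟨i, fun j => ?_⟩
  by_cases hj : j = i
  · subst hj; simpa
  · simp [hj]

lemma hammingDist_eq_sum (x y : ∀ i, β i) :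
    hammingDist x y = ∑ j, if x j ≠ y j then 1 else 0 :=
  Finset.card_filter _ _

lemma eq_of_hammingDist_add_hammingDist_eq {x y z : ∀ i, β i}
    (h : hammingDist x y + hammingDist y z = hammingDist x z) {i : ι} (hi : x i = z i) :
    y i = x i := by
  by_contra hne
  have hlt : hammingDist x z < hammingDist x y + hammingDist y z := by
    rw [hammingDist_eq_sum, hammingDist_eq_sum, hammingDist_eq_sum, ← Finset.sum_add_distrib]
    refine Finset.sum_lt_sum (fun j _ => ?_) ⟨i, Finset.mem_univ i, ?_⟩
    · split_ifs <;> simp_all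
    · split_ifs <;> simp_all
  omega

end Hamming

lemma hammingDist_add_ne_iff {ι : Type*} [Fintype ι] {x y u v : ι → Bool} {i : ι}
    (hxy : ∀ j, x j ≠ y j ↔ j = i) :
    hammingDist x u + hammingDist y v ≠ hammingDist x v + hammingDist y u ↔ u i ≠ v i := by
  classical
  have hrest : ∀ j ∈ ({i}ᶜ : Finset ι),
      ((if x j ≠ u j then 1 else 0) + if y j ≠ v j then 1 else 0) =
      ((if x j ≠ v j then 1 else 0) + if y j ≠ u j then 1 else 0) := by
    intro j hj
    have : x j = y j := not_not.mp fun h => by simp_all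
    rw [this, add_comm]
  rw [hammingDist_eq_sum, hammingDist_eq_sum, hammingDist_eq_sum, hammingDist_eq_sum,
    ← Finset.sum_add_distrib, ← Finset.sum_add_distrib, Fintype.sum_eq_add_sum_compl i,
    Fintype.sum_eq_add_sum_compl i, Finset.sum_congr rfl hrest, Ne, add_left_inj, ← Ne,
    Bool.eq_not.mpr ((hxy i).mpr rfl).symm]
  cases x i <;> cases u i <;> cases v i <;> simp

lemma hypercubeGraph_adj_iff {d : ℕ} {x y : Fin d → Bool} :
    (hypercubeGraph d).Adj x y ↔ hammingDist x y = 1 :=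
  Iff.rfl

lemma hammingDist_le_length {d : ℕ} {x y : Fin d → Bool} (p : (hypercubeGraph d).Walk x y) :
    hammingDist x y ≤ p.length := by
  induction p with
  | nil => simp
  | @cons x z y hxz p ih =>
    have hxz := hypercubeGraph_adj_iff.mp hxz
    have := hammingDist_triangle x z y
    rw [Walk.length_cons]
    omega

lemma exists_walk_length_eq_hammingDist {d : ℕ} (x y : Fin d → Bool) :
    ∃ p : (hypercubeGraph d).Walk x y, p.length = hammingDist x y := by
  induction hn : hammingDist x y generalizing x with
  | zero =>
    obtain rfl := hammingDist_eq_zero.mp hn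
    exact ⟨.nil, rfl⟩
  | succ n ih =>
    have hne : x ≠ y := hammingDist_ne_zero.mp (by omega)
    obtain ⟨i, hi⟩ := Function.ne_iff.mp hne
    obtain ⟨p, hp⟩ := ih (Function.update x i (y i))
      (by have := hammingDist_update_add_one hi; omega)
    exact ⟨.cons (hypercubeGraph_adj_iff.mpr (hammingDist_update_self hi)) p, by simp [hp]⟩

lemma hypercubeGraph_dist {d : ℕ} (x y : Fin d → Bool) :
    (hypercubeGraph d).dist x y = hammingDist x y := by
  obtain ⟨p, hp⟩ := exists_walk_length_eq_hammingDist x y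
  obtain ⟨q, hq⟩ := p.reachable.exists_walk_length_eq_dist
  exact le_antisymm (hp ▸ dist_le p) (hq ▸ hammingDist_le_length q)

namespace SimpleGraph

variable {V : Type*} {G : SimpleGraph V} {u v w : V}

lemma Walk.dist_add_dist_of_length_eq_dist {p : G.Walk u v} (hp : p.length = G.dist u v)
    (hw : w ∈ p.support) : G.dist u w + G.dist w v = G.dist u v := by
  classical
  rw [← length_eq_dist_of_subwalk hp (p.isSubwalk_takeUntil hw),
    ← length_eq_dist_of_subwalk hp (p.isSubwalk_dropUntil hw), ← Walk.length_append,
    Walk.take_spec, hp]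

lemma ConnectedComponent.mem_supp_of_mem_support (c : G.ConnectedComponent) (hu : u ∈ c.supp)
    (p : G.Walk u v) (hw : w ∈ p.support) : w ∈ c.supp := by
  classical
  exact (c.mem_supp_iff w).mpr
    ((ConnectedComponent.sound (p.takeUntil w hw).reachable).symm.trans hu)

lemma dist_le_dist_induce {s : Set V} {x y : s} (h : (G.induce s).Reachable x y) :
    G.dist x y ≤ (G.induce s).dist x y := by
  obtain ⟨p, hp⟩ := h.exists_walk_length_eq_dist
  rw [← hp, ← Walk.length_map (Embedding.induce s).toHom]
  exact dist_le _

lemma ConnectedComponent.dist_induce_supp_of_deleteEdges {C : Set (Sym2 V)}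
    (c : (G.deleteEdges C).ConnectedComponent)
    (h : ∀ u ∈ c.supp, ∀ v ∈ c.supp,
      ∃ p : G.Walk u v, p.length = G.dist u v ∧ ∀ e ∈ p.edges, e ∉ C)
    (x y : c.supp) : (G.induce c.supp).dist x y = G.dist x y := by
  obtain ⟨p, hp, hpC⟩ := h x x.2 y y.2
  have hsupp : ∀ w ∈ p.support, w ∈ c.supp := fun w hw =>
    c.mem_supp_of_mem_support x.2 (p.toDeleteEdges C hpC) (by simpa using hw)
  let q : (G.induce c.supp).Walk x y := p.induce c.supp hsupp
  have hq : q.length = p.length := by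
    rw [← Walk.length_map (Embedding.induce c.supp).toHom, Walk.map_induce]
    rfl
  exact le_antisymm (hp ▸ hq ▸ dist_le q) (dist_le_dist_induce q.reachable)

lemma Reachable.apply_eq_of_deleteEdges {β : Type*} {f : V → β} {C : Set (Sym2 V)}
    (hC : ∀ ⦃u v⦄, G.Adj u v → (s(u, v) ∈ C ↔ f u ≠ f v))
    (h : (G.deleteEdges C).Reachable u v) : f u = f v := by
  obtain ⟨p⟩ := h
  induction p with
  | nil => rfl
  | cons huv _ ih =>
    obtain ⟨hadj, hnot⟩ := deleteEdges_adj.mp huv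
    exact (not_not.mp fun hne => hnot ((hC hadj).mpr hne)).trans ih

lemma Walk.edges_notMem_of_forall_support_eq {β : Type*} {f : V → β} {C : Set (Sym2 V)}
    (hC : ∀ ⦃u v⦄, G.Adj u v → (s(u, v) ∈ C ↔ f u ≠ f v)) (p : G.Walk u v)
    (hp : ∀ w ∈ p.support, f w = f u) : ∀ e ∈ p.edges, e ∉ C := by
  intro e he
  induction e using Sym2.ind with
  | _ a b =>
  rw [hC (p.adj_of_mem_edges he), hp a (p.fst_mem_support_of_mem_edges he),
    hp b (p.snd_mem_support_of_mem_edges he)]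
  exact fun h => h rfl

end SimpleGraph

lemma dwRel_mk_iff {V : Type} {G : SimpleGraph V} {a b u v : V} :
    DWRel G s(a, b) s(u, v) ↔ G.dist a u + G.dist b v ≠ G.dist a v + G.dist b u := by
  refine ⟨?_, fun h => ⟨a, b, u, v, rfl, rfl, h⟩⟩
  rintro ⟨x, y, u', v', hxy, huv, hne⟩
  rw [Sym2.eq_iff] at hxy huv
  rcases hxy with ⟨rfl, rfl⟩ | ⟨rfl, rfl⟩ <;> rcases huv with ⟨rfl, rfl⟩ | ⟨rfl, rfl⟩ <;>
    omega

section PartialCube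

variable {V ι : Type*} [Fintype ι] {G : SimpleGraph V} {φ : V → ι → Bool} {u v w : V}

lemma exists_coord_of_adj (hφ : ∀ v w, G.dist v w = hammingDist (φ v) (φ w)) (h : G.Adj u v) :
    ∃ i, ∀ j, φ u j ≠ φ v j ↔ j = i :=
  hammingDist_eq_one_iff.mp (hφ u v ▸ dist_eq_one_iff_adj.mpr h)

lemma coord_eq_of_mem_support_of_length_eq_dist
    (hφ : ∀ v w, G.dist v w = hammingDist (φ v) (φ w)) {p : G.Walk u v}
    (hp : p.length = G.dist u v) {i : ι} (huv : φ u i = φ v i) (hw : w ∈ p.support) :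
    φ w i = φ u i :=
  eq_of_hammingDist_add_hammingDist_eq
    (by simpa only [hφ] using p.dist_add_dist_of_length_eq_dist hp hw) huv

end PartialCube

lemma IsThetaClass.exists_mem_iff_coord_ne {V ι : Type} [Fintype ι] {G : SimpleGraph V}
    {φ : V → ι → Bool} (hφ : ∀ v w, G.dist v w = hammingDist (φ v) (φ w))
    {C : Set (Sym2 V)} (hC : IsThetaClass G C) :
    ∃ i, ∀ ⦃u v⦄, G.Adj u v → (s(u, v) ∈ C ↔ φ u i ≠ φ v i) := by
  obtain ⟨e, he, rfl⟩ := hC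
  induction e using Sym2.ind with
  | _ a b =>
  obtain ⟨i, hi⟩ := exists_coord_of_adj hφ he
  refine ⟨i, fun u v huv => ?_⟩
  simp only [Set.mem_ofPred_eq, mem_edgeSet, huv, true_and, dwRel_mk_iff, hφ]
  exact hammingDist_add_ne_iff hi

/-- If `H` is a partial cube and `E_f` is a `Θ`-class of `H`, then each
connected component of `H \ E_f`, regarded as a subgraph of `H` with all
induced edges, is an isometric subgraph of `H` and is itself a partial
cube. -/
theorem component_of_deleteEdges_thetaClass_isometric_partialCube {V : Type}
    (H : SimpleGraph V) (hH : IsPartialCube H) (C : Set (Sym2 V))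
    (hC : IsThetaClass H C) (c : (H.deleteEdges C).ConnectedComponent) :
    (∀ u v : c.supp, (H.induce c.supp).dist u v = H.dist u.val v.val) ∧
    IsPartialCube (H.induce c.supp) := by
  obtain ⟨hconn, d, φ, hinj, hdist⟩ := hH
  have hφ : ∀ v w, H.dist v w = hammingDist (φ v) (φ w) := fun v w => by
    rw [← hdist, hypercubeGraph_dist]
  obtain ⟨i, hcut⟩ := hC.exists_mem_iff_coord_ne hφ
  have hiso := c.dist_induce_supp_of_deleteEdges fun u hu v hv => by
    obtain ⟨p, hp⟩ := hconn.exists_walk_length_eq_dist u v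
    have hside : φ u i = φ v i := (c.reachable_of_mem_supp hu hv).apply_eq_of_deleteEdges hcut
    exact ⟨p, hp, p.edges_notMem_of_forall_support_eq hcut fun w hw =>
      coord_eq_of_mem_support_of_length_eq_dist hφ hp hside hw⟩
  have hconn_c : (H.induce c.supp).Connected :=
    c.connected_toSimpleGraph.mono fun _ _ h => deleteEdges_le C h
  exact ⟨hiso, hconn_c, d, fun x => φ x, hinj.comp Subtype.val_injective,
    fun x y => by rw [hiso, hdist]⟩
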